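/- For every m ≥ 2, each element r_{i_1 ⋯ i_m} lies in W_m, and the set {r_{i_1 i_2 ⋯ i_m} : 1 ≤ i_1 < i_2 < ⋯ < i_m ≤ n} is a basis of the subspace W_m of V^{⊗m}; in particular W_m = 0 for m > n. -/

import Mathlib

/-!
Expand tensors in the basis `x_K = x_{K 0} ⊗ ⋯ ⊗ x_{K (m-1)}`, `K : Fin m → Fin n`. A tensor lies in
`V^{⊗s} ⊗ R ⊗ V^{⊗t}` exactly when its coefficient function is alternating in the positions `s`,
`s + 1` (it vanishes when `K s = K (s + 1)` and changes sign when they are swapped), so `W_m` is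
the space of tensors whose coefficients are alternating in every pair of adjacent positions.
Adjacent transpositions generate the symmetric group, so such a coefficient function is
determined by its values on strictly increasing `K`, and vanishes when `n < m`. The coefficient
of `r_ι` at `K` is the determinant of the 0/1 matrix `[ι t = K s]` (Laplace expansion along the
last row): it is alternating in `K`, and for strictly increasing `ι`, `K` it is `δ_{ι K}`.
-/

open scoped TensorProduct
open PiTensorProduct

namespace OrePaper

variable (k : Type*) [Field k] (V : Type*) [AddCommGroup V] [Module k V]

/-- The canonical isomorphism `V^{⊗a} ⊗ V^{⊗b} ≃ V^{⊗(a+b)}`. -/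
noncomputable abbrev mulPow (a b : ℕ) :
    ((⨂[k]^a V) ⊗[k] (⨂[k]^b V)) ≃ₗ[k] ⨂[k]^(a+b) V :=
  TensorPower.mulEquiv

variable {k V}

/-- Identification of `V` with `V^{⊗1}`. -/
noncomputable def toPow1 : V ≃ₗ[k] ⨂[k]^1 V :=
  (PiTensorProduct.subsingletonEquiv (s := fun _ : Fin 1 => V) (0 : Fin 1)).symm

/-- `w ⊗ v ∈ V^{⊗(m+1)}` for `w ∈ V^{⊗m}`, `v ∈ V`. -/
noncomputable def append {m : ℕ} (w : ⨂[k]^m V) (v : V) : ⨂[k]^(m+1) V :=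
  mulPow k V m 1 (w ⊗ₜ[k] toPow1 v)

/-- `v ⊗ w ∈ V^{⊗(m+1)}` for `v ∈ V`, `w ∈ V^{⊗m}`. -/
noncomputable def prepend {m : ℕ} (v : V) (w : ⨂[k]^m V) : ⨂[k]^(m+1) V :=
  TensorPower.cast k V (Nat.add_comm 1 m) (mulPow k V 1 m (toPow1 v ⊗ₜ[k] w))

/-- The elements `r_{i_1 i_2 ⋯ i_m} ∈ V^{⊗m}`:
`r_{i_1 i_2} = x_{i_1} ⊗ x_{i_2} − x_{i_2} ⊗ x_{i_1}` and, recursively for `m ≥ 3`,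
`r_{i_1 ⋯ i_m} = ∑_{j=1}^{m} (−1)^{m−j} r_{i_1 ⋯ î_j ⋯ i_m} ⊗ x_{i_j}`.
(For a single index we set `r_i = x_i`, which is the convention making the left-handed
expansion hold also for `m = 2`.) -/
noncomputable def rElt {n : ℕ} (x : Fin n → V) : (m : ℕ) → (Fin m → Fin n) → ⨂[k]^m V
  | 0, _ => 0
  | 1, ι => toPow1 (x (ι 0))
  | 2, ι => append (toPow1 (x (ι 0))) (x (ι 1)) - append (toPow1 (x (ι 1))) (x (ι 0))
  | (m+3), ι => ∑ j : Fin (m+3),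
      ((-1 : k)^((m+2) - (j : ℕ))) • append (rElt x (m+2) (ι ∘ j.succAbove)) (x (ι j))
/-- The quadratic relation space `R ⊆ V^{⊗2}` of the polynomial algebra: the span of the
commutators `x_i ⊗ x_j − x_j ⊗ x_i`. -/
noncomputable def Rspan {n : ℕ} (x : Fin n → V) : Submodule k (⨂[k]^2 V) :=
  Submodule.span k {w : ⨂[k]^2 V | ∃ i j : Fin n,
    w = append (toPow1 (x i)) (x j) - append (toPow1 (x j)) (x i)}

/-- The subspace `V^{⊗s} ⊗ R ⊗ V^{⊗t}` of `V^{⊗(s+(2+t))}`: the image of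
`V^{⊗s} ⊗ (R ⊗ V^{⊗t})` under the canonical map. -/
noncomputable def sandwich (R : Submodule k (⨂[k]^2 V)) (s t : ℕ) :
    Submodule k (⨂[k]^(s+(2+t)) V) :=
  LinearMap.range
    ((mulPow k V s (2+t)).toLinearMap
      ∘ₗ TensorProduct.map LinearMap.id
          ((mulPow k V 2 t).toLinearMap ∘ₗ TensorProduct.map R.subtype LinearMap.id))

/-- The Koszul subspaces `W_m = ⋂_{s=0}^{m−2} V^{⊗s} ⊗ R ⊗ V^{⊗(m−s−2)}` of `V^{⊗m}`
for the polynomial algebra. -/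
noncomputable def Wspace {n : ℕ} (x : Fin n → V) (m : ℕ) : Submodule k (⨂[k]^m V) :=
  ⨅ s : Fin (m-1),
    Submodule.map
      (TensorPower.cast k V
        (by have := s.isLt; omega : (s : ℕ) + (2 + (m - (s : ℕ) - 2)) = m)).toLinearMap
      (sandwich (Rspan x) (s : ℕ) (m - (s : ℕ) - 2))


open Module

variable {n : ℕ}

noncomputable def powBasis (b : Basis (Fin n) k V) (m : ℕ) :
    Basis (Fin m → Fin n) k (⨂[k]^m V) :=
  Basis.piTensorProduct fun _ => b

section Coordinates

variable (b : Basis (Fin n) k V)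

theorem powBasis_apply {m : ℕ} (K : Fin m → Fin n) :
    powBasis b m K = tprod k fun i => b (K i) :=
  Basis.piTensorProduct_apply _ K

theorem powBasis_repr_tprod {m : ℕ} (f : Fin m → V) (K : Fin m → Fin n) :
    (powBasis b m).repr (tprod k f) K = ∏ i, b.repr (f i) (K i) :=
  Basis.piTensorProduct_repr_tprod_apply _ f K

theorem mulPow_tprod {a c : ℕ} (f : Fin a → V) (g : Fin c → V) :
    mulPow k V a c (tprod k f ⊗ₜ[k] tprod k g) = tprod k (Fin.append f g) := by
  rw [← TensorPower.gMul_def, TensorPower.tprod_mul_tprod]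

theorem toPow1_apply (v : V) : toPow1 v = tprod k fun _ : Fin 1 => v := by
  rw [toPow1, LinearEquiv.symm_apply_eq, subsingletonEquiv_apply_tprod]

theorem powBasis_repr_mulPow {a c : ℕ} (u : ⨂[k]^a V) (w : ⨂[k]^c V)
    (K : Fin (a + c) → Fin n) :
    (powBasis b (a + c)).repr (mulPow k V a c (u ⊗ₜ[k] w)) K
      = (powBasis b a).repr u (K ∘ Fin.castAdd c)
        * (powBasis b c).repr w (K ∘ Fin.natAdd a) := by
  induction u using PiTensorProduct.induction_on with
  | smul_tprod r f =>
    induction w using PiTensorProduct.induction_on with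
    | smul_tprod r' g =>
      simp only [TensorProduct.smul_tmul_smul, map_smul, mulPow_tprod, Finsupp.smul_apply,
        powBasis_repr_tprod, Fin.prod_univ_add, Fin.append_left, Fin.append_right,
        Function.comp_apply, smul_eq_mul]
      ring
    | add w₁ w₂ h₁ h₂ =>
      simp only [TensorProduct.tmul_add, map_add, Finsupp.add_apply, h₁, h₂, mul_add]
  | add u₁ u₂ h₁ h₂ =>
    simp only [TensorProduct.add_tmul, map_add, Finsupp.add_apply, h₁, h₂, add_mul]

theorem powBasis_repr_cast {a a' : ℕ} (h : a = a') (w : ⨂[k]^a V) (K : Fin a' → Fin n) :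
    (powBasis b a').repr (TensorPower.cast k V h w) K
      = (powBasis b a).repr w (K ∘ Fin.cast h) := by
  subst h
  simp [TensorPower.cast_refl]

theorem powBasis_repr_append {m : ℕ} (w : ⨂[k]^m V) (v : V) (K : Fin (m + 1) → Fin n) :
    (powBasis b (m + 1)).repr (append w v) K
      = (powBasis b m).repr w (K ∘ Fin.castSucc) * b.repr v (K (Fin.last m)) := by
  rw [append, powBasis_repr_mulPow, toPow1_apply, powBasis_repr_tprod, Fin.prod_univ_one]
  rfl

theorem powBasis_repr_toPow1 (v : V) (K : Fin 1 → Fin n) :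
    (powBasis b 1).repr (toPow1 v) K = b.repr v (K 0) := by
  rw [toPow1_apply, powBasis_repr_tprod, Fin.prod_univ_one]

theorem append_toPow1 (i j : Fin n) :
    append (toPow1 (b i)) (b j) = powBasis b 2 ![i, j] := by
  rw [toPow1_apply, append, toPow1_apply, mulPow_tprod, powBasis_apply]
  congr 1
  funext q
  fin_cases q <;> rfl

end Coordinates

section Alternating

variable {ι α : Type*} [DecidableEq ι]

-- The diagonal condition does not follow from the sign condition in characteristic 2.
variable (k) in
def altAt (i j : ι) : Submodule k ((ι → α) → k) where
  carrier := {c | (∀ K, K i = K j → c K = 0) ∧ ∀ K, c (K ∘ Equiv.swap i j) = -c K}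
  add_mem' {c d} hc hd :=
    ⟨fun K hK => by simp [hc.1 K hK, hd.1 K hK], fun K => by simp [hc.2 K, hd.2 K, add_comm]⟩
  zero_mem' := ⟨fun _ _ => rfl, fun _ => by simp⟩
  smul_mem' a c hc := ⟨fun K hK => by simp [hc.1 K hK], fun K => by simp [hc.2 K]⟩

theorem comp_swap_eq_iff {i j : ι} {K K' : ι → α} :
    K ∘ Equiv.swap i j = K' ↔ K = K' ∘ Equiv.swap i j :=
  Equiv.comp_symm_eq (Equiv.swap i j) K' K

theorem comp_swap_of_eq {i j : ι} {K : ι → α} (h : K i = K j) : K ∘ Equiv.swap i j = K := by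
  funext q
  rcases eq_or_ne q i with rfl | hi
  · simp [h]
  rcases eq_or_ne q j with rfl | hj
  · simp [h]
  simp [Equiv.swap_apply_of_ne_of_ne hi hj]

theorem repr_sub_swap_mem_altAt {M : Type*} [AddCommGroup M] [Module k M]
    (B : Basis (ι → α) k M) (K : ι → α) (i j : ι) :
    ⇑(B.repr (B K - B (K ∘ Equiv.swap i j))) ∈ altAt k i j := by
  classical
  refine ⟨fun K' hK' => ?_, fun K' => ?_⟩
  · simp [Finsupp.single_apply, comp_swap_eq_iff, comp_swap_of_eq hK']
  · simp only [map_sub, Basis.repr_self, Finsupp.coe_sub, Pi.sub_apply, Finsupp.single_apply,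
      comp_swap_eq_iff]
    simp only [Function.comp_def, Equiv.swap_apply_self]
    ring

theorem eq_sum_smul_sub_swap [Fintype ι] [Fintype α] [DecidableEq α] [LinearOrder α]
    {M : Type*} [AddCommGroup M] [Module k M] (B : Basis (ι → α) k M) {i j : ι} {w : M}
    (hw : ⇑(B.repr w) ∈ altAt k i j) :
    w = ∑ K ∈ Finset.univ.filter (fun K : ι → α => K i < K j),
      B.repr w K • (B K - B (K ∘ Equiv.swap i j)) := by
  refine B.ext_elem fun K' => ?_
  have hswap := hw.2 K'
  simp only [map_sum, map_smul, map_sub, Basis.repr_self, Finsupp.coe_finsetSum, Finset.sum_apply,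
    Finsupp.smul_apply, Finsupp.sub_apply, Finsupp.single_apply, smul_eq_mul, mul_sub, mul_ite,
    mul_one, mul_zero, Finset.sum_sub_distrib, comp_swap_eq_iff, Finset.sum_ite_eq',
    Finset.mem_filter, Finset.mem_univ, true_and, Function.comp_apply, Equiv.swap_apply_left,
    Equiv.swap_apply_right]
  rcases lt_trichotomy (K' i) (K' j) with h | h | h
  · simp [h, h.not_gt]
  · simp [h, hw.1 K' h]
  · simp [h, h.not_gt, hswap]

theorem comp_cast_mem_altAt_iff {a a' : ℕ} (h : a = a') (c : (Fin a → α) → k) (i j : Fin a') :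
    (fun K => c (K ∘ Fin.cast h)) ∈ altAt k i j
      ↔ c ∈ altAt k (Fin.cast h.symm i) (Fin.cast h.symm j) := by
  subst h
  rfl

theorem eq_zero_of_mem_altAt_adjacent [LinearOrder α] {m : ℕ} {c : (Fin (m + 1) → α) → k}
    (halt : ∀ i : Fin m, c ∈ altAt k i.castSucc i.succ)
    (hmono : ∀ K, StrictMono K → c K = 0)
    (K : Fin (m + 1) → α) : c K = 0 := by
  have hperm : ∀ σ : Equiv.Perm (Fin (m + 1)), ∀ K, c (K ∘ σ) = 0 → c K = 0 := by
    intro σ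
    induction σ using Submonoid.induction_of_closure_eq_top_right
      (Equiv.Perm.mclosure_swap_castSucc_succ m) with
    | one => exact fun K hK => hK
    | mul_right σ τ hτ ih =>
      obtain ⟨i, rfl⟩ := hτ
      intro K hK
      rw [Equiv.Perm.coe_mul, ← Function.comp_assoc, (halt i).2] at hK
      exact ih K (neg_eq_zero.mp hK)
  refine hperm (Tuple.sort K) K ?_
  by_cases hs : StrictMono (K ∘ Tuple.sort K)
  · exact hmono _ hs
  obtain ⟨i, hi⟩ := not_forall.mp (mt Fin.strictMono_iff_lt_succ.mpr hs)
  exact (halt i).1 _ ((Tuple.monotone_sort K i.castSucc_le_succ).antisymm (not_lt.mp hi))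

end Alternating

section Determinant

theorem rElt_add_two (x : Fin n → V) (m : ℕ) (ι : Fin (m + 2) → Fin n) :
    rElt (k := k) x (m + 2) ι = ∑ j : Fin (m + 2), ((-1 : k) ^ ((m + 1) - (j : ℕ)))
      • append (rElt x (m + 1) (ι ∘ j.succAbove)) (x (ι j)) := by
  match m with
  | 0 =>
    rw [Fin.sum_univ_two]
    simp [rElt, sub_eq_add_neg, add_comm]
  | _ + 1 => rfl

def matchMatrix {m : ℕ} (ι K : Fin m → Fin n) : Matrix (Fin m) (Fin m) k :=
  Matrix.of fun s t => if ι t = K s then 1 else 0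

theorem powBasis_repr_rElt (b : Basis (Fin n) k V) (m : ℕ) (ι K : Fin (m + 1) → Fin n) :
    (powBasis b (m + 1)).repr (rElt ⇑b (m + 1) ι) K = (matchMatrix ι K : Matrix _ _ k).det := by
  induction m with
  | zero =>
    rw [Matrix.det_fin_one, rElt, powBasis_repr_toPow1, Basis.repr_self_apply]
    rfl
  | succ m ih =>
    rw [rElt_add_two, map_sum, Finsupp.coe_finsetSum, Finset.sum_apply,
      Matrix.det_succ_row _ (Fin.last (m + 1))]
    refine Finset.sum_congr rfl fun j _ => ?_
    have hminor : (matchMatrix ι K).submatrix (Fin.last (m + 1)).succAbove j.succAbove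
        = (matchMatrix (ι ∘ j.succAbove) (K ∘ Fin.castSucc) : Matrix _ _ k) := by
      ext s t
      simp [matchMatrix, Fin.succAbove_last]
    have hsign : (-1 : k) ^ ((m + 1) - (j : ℕ)) = (-1) ^ ((Fin.last (m + 1) : ℕ) + j) := by
      rw [Fin.val_last, ← Nat.sub_add_cancel (Nat.le_of_lt_succ j.isLt), add_assoc,
        pow_add _ _ (j + j), ← two_mul, pow_mul, neg_one_sq, one_pow, mul_one, Nat.add_sub_cancel]
    rw [map_smul, Finsupp.smul_apply, powBasis_repr_append, ih, Basis.repr_self_apply, hminor,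
      hsign, smul_eq_mul]
    simp only [matchMatrix, Matrix.of_apply]
    ring

theorem det_matchMatrix_mem_altAt {m : ℕ} (ι : Fin m → Fin n) {i j : Fin m} (hij : i ≠ j) :
    (fun K => (matchMatrix ι K : Matrix _ _ k).det) ∈ altAt k i j := by
  refine ⟨fun K hK => Matrix.det_zero_of_row_eq hij ?_, fun K => ?_⟩
  · ext t
    simp [matchMatrix, hK]
  · change ((matchMatrix ι K).submatrix (Equiv.swap i j) id).det = _
    rw [Matrix.det_permute, Equiv.Perm.sign_swap hij]
    simp

theorem det_matchMatrix_of_strictMono {m : ℕ} {ι κ : Fin m → Fin n} (hι : StrictMono ι)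
    (hκ : StrictMono κ) : (matchMatrix ι κ : Matrix _ _ k).det = if ι = κ then 1 else 0 := by
  split_ifs with h
  · subst h
    have hone : (matchMatrix ι ι : Matrix _ _ k) = 1 := by
      ext s t
      simp [matchMatrix, Matrix.one_apply, hι.injective.eq_iff, eq_comm]
    rw [hone, Matrix.det_one]
  · obtain ⟨s, hs⟩ : ∃ s, ∀ t, ι t ≠ κ s := by
      by_contra! hcover
      have hsub : Set.range κ ⊆ Set.range ι := Set.range_subset_iff.mpr hcover
      refine h ((hι.range_inj hκ).mp (Set.eq_of_subset_of_ncard_le hsub ?_).symm)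
      rw [Set.ncard_range_of_injective hι.injective, Set.ncard_range_of_injective hκ.injective]
    exact Matrix.det_eq_zero_of_row_eq_zero s fun t => by simp [matchMatrix, hs t]

end Determinant

section Sandwich

variable {α : Type*}

theorem exists_eq_append_append {s t : ℕ} (K : Fin (s + (2 + t)) → α) :
    ∃ J P L, K = Fin.append J (Fin.append P L) :=
  ⟨_, _, _, by rw [Fin.append_castAdd_natAdd, Fin.append_castAdd_natAdd]⟩

theorem append_append_comp_swap {s t : ℕ} (J : Fin s → α) (P : Fin 2 → α)
    (L : Fin t → α) :
    Fin.append J (Fin.append P L)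
        ∘ Equiv.swap (Fin.natAdd s (Fin.castAdd t 0)) (Fin.natAdd s (Fin.castAdd t 1))
      = Fin.append J (Fin.append (P ∘ Equiv.swap 0 1) L) := by
  funext q
  refine Fin.addCases (fun i => ?_) (fun q => Fin.addCases (fun i => ?_) (fun i => ?_) q) q
  · rw [Function.comp_apply, Equiv.swap_apply_of_ne_of_ne] <;> simp [Fin.ext_iff] <;> omega
  · fin_cases i <;> simp
  · rw [Function.comp_apply, Equiv.swap_apply_of_ne_of_ne] <;> simp [Fin.ext_iff]; omega

theorem mem_altAt_of_forall_append {s t : ℕ} {c : (Fin (s + (2 + t)) → α) → k}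
    (hdiag : ∀ J P L, P 0 = P 1 → c (Fin.append J (Fin.append P L)) = 0)
    (hswap : ∀ J P L, c (Fin.append J (Fin.append (P ∘ Equiv.swap 0 1) L))
      = -c (Fin.append J (Fin.append P L))) :
    c ∈ altAt k (Fin.natAdd s (Fin.castAdd t 0)) (Fin.natAdd s (Fin.castAdd t 1)) := by
  refine ⟨fun K hK => ?_, fun K => ?_⟩ <;>
    obtain ⟨J, P, L, rfl⟩ := exists_eq_append_append K
  · exact hdiag J P L (by simpa using hK)
  · rw [append_append_comp_swap]
    exact hswap J P L

end Sandwich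

section Subspaces

variable (b : Basis (Fin n) k V)

theorem powBasis_repr_mem_altAt_of_mem_Rspan {r : ⨂[k]^2 V} (hr : r ∈ Rspan ⇑b) :
    ⇑((powBasis b 2).repr r) ∈ altAt k (0 : Fin 2) 1 := by
  induction hr using Submodule.span_induction with
  | mem g hg =>
    obtain ⟨i, j, rfl⟩ := hg
    have hji : (![j, i] : Fin 2 → Fin n) = ![i, j] ∘ Equiv.swap 0 1 := by
      ext q; fin_cases q <;> rfl
    rw [append_toPow1, append_toPow1, hji]
    exact repr_sub_swap_mem_altAt _ _ _ _
  | zero => simp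
  | add y z _ _ hy hz => simpa using add_mem hy hz
  | smul a y _ hy => simpa using Submodule.smul_mem _ a hy

theorem powBasis_append_append {s t : ℕ} (J : Fin s → Fin n) (P : Fin 2 → Fin n)
    (L : Fin t → Fin n) :
    powBasis b (s + (2 + t)) (Fin.append J (Fin.append P L))
      = mulPow k V s (2 + t)
          (powBasis b s J ⊗ₜ[k] mulPow k V 2 t (powBasis b 2 P ⊗ₜ[k] powBasis b t L)) := by
  simp only [powBasis_apply, mulPow_tprod]
  congr 1
  funext q
  refine Fin.addCases (fun i => ?_) (fun q => Fin.addCases (fun i => ?_) (fun i => ?_) q) q <;> simp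

theorem powBasis_repr_mulPow_mulPow {s t : ℕ} (u : ⨂[k]^s V) (r : ⨂[k]^2 V) (v : ⨂[k]^t V)
    (J : Fin s → Fin n) (P : Fin 2 → Fin n) (L : Fin t → Fin n) :
    (powBasis b (s + (2 + t))).repr
        (mulPow k V s (2 + t) (u ⊗ₜ[k] mulPow k V 2 t (r ⊗ₜ[k] v)))
        (Fin.append J (Fin.append P L))
      = (powBasis b s).repr u J * ((powBasis b 2).repr r P * (powBasis b t).repr v L) := by
  rw [powBasis_repr_mulPow, powBasis_repr_mulPow]
  simp only [Function.comp_def, Fin.append_left, Fin.append_right]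

theorem powBasis_sub_swap_mem_sandwich {s t : ℕ} (K : Fin (s + (2 + t)) → Fin n) :
    powBasis b _ K - powBasis b _
        (K ∘ Equiv.swap (Fin.natAdd s (Fin.castAdd t 0)) (Fin.natAdd s (Fin.castAdd t 1)))
      ∈ sandwich (Rspan ⇑b) s t := by
  obtain ⟨J, P, L, rfl⟩ := exists_eq_append_append K
  have hP : powBasis b 2 P - powBasis b 2 (P ∘ Equiv.swap 0 1) ∈ Rspan ⇑b := by
    refine Submodule.subset_span ⟨P 0, P 1, ?_⟩
    rw [append_toPow1, append_toPow1]
    congr 2 <;> ext q <;> fin_cases q <;> rfl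
  refine ⟨powBasis b s J ⊗ₜ[k] (⟨_, hP⟩ ⊗ₜ[k] powBasis b t L), ?_⟩
  simp [append_append_comp_swap, powBasis_append_append, TensorProduct.sub_tmul,
    TensorProduct.tmul_sub]

theorem mem_sandwich_iff {s t : ℕ} {w : ⨂[k]^(s + (2 + t)) V} :
    w ∈ sandwich (Rspan ⇑b) s t ↔
      ⇑((powBasis b _).repr w)
        ∈ altAt k (Fin.natAdd s (Fin.castAdd t 0)) (Fin.natAdd s (Fin.castAdd t 1)) := by
  constructor
  · rintro ⟨z, rfl⟩
    induction z using TensorProduct.induction_on with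
    | zero => simp
    | add z₁ z₂ h₁ h₂ => simpa using add_mem h₁ h₂
    | tmul u y =>
      induction y using TensorProduct.induction_on with
      | zero => simp
      | add y₁ y₂ h₁ h₂ => simpa [TensorProduct.tmul_add] using add_mem h₁ h₂
      | tmul r v =>
        have hr := powBasis_repr_mem_altAt_of_mem_Rspan b r.2
        refine mem_altAt_of_forall_append (fun J P L hP => ?_) (fun J P L => ?_) <;>
          simp only [LinearMap.coe_comp, LinearEquiv.coe_coe, Function.comp_apply,
            TensorProduct.map_tmul, LinearMap.id_coe, id_eq, Submodule.coe_subtype,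
            powBasis_repr_mulPow_mulPow]
        · rw [hr.1 P hP, zero_mul, mul_zero]
        · rw [hr.2 P]
          ring
  · intro hw
    rw [eq_sum_smul_sub_swap (powBasis b _) hw]
    exact Submodule.sum_mem _ fun K _ => Submodule.smul_mem _ _ (powBasis_sub_swap_mem_sandwich b K)

theorem mem_Wspace_iff {m : ℕ} {w : ⨂[k]^(m + 1) V} :
    w ∈ Wspace ⇑b (m + 1)
      ↔ ∀ i : Fin m, ⇑((powBasis b (m + 1)).repr w) ∈ altAt k i.castSucc i.succ := by
  have hrepr : ∀ {a} (h : m + 1 = a), ⇑((powBasis b a).repr (TensorPower.cast k V h w))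
      = fun K => (powBasis b (m + 1)).repr w (K ∘ Fin.cast h) :=
    fun h => funext (powBasis_repr_cast b h w)
  simp only [Wspace, Submodule.mem_iInf, Submodule.mem_map_equiv, TensorPower.cast_symm,
    mem_sandwich_iff, hrepr, comp_cast_mem_altAt_iff]
  refine ⟨fun h i => ?_, fun h i => ?_⟩ <;> convert h i using 2 <;> ext <;> simp

theorem rElt_mem_Wspace (m : ℕ) (ι : Fin (m + 1) → Fin n) :
    rElt (k := k) ⇑b (m + 1) ι ∈ Wspace ⇑b (m + 1) := by
  refine (mem_Wspace_iff b).mpr fun i => ?_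
  rw [show ⇑((powBasis b (m + 1)).repr (rElt ⇑b (m + 1) ι)) = _ from
    funext (powBasis_repr_rElt b m ι)]
  exact det_matchMatrix_mem_altAt ι (Fin.castSucc_lt_succ (i := i)).ne

theorem powBasis_repr_rElt_of_strictMono {m : ℕ} {ι κ : Fin (m + 1) → Fin n}
    (hι : StrictMono ι) (hκ : StrictMono κ) :
    (powBasis b (m + 1)).repr (rElt ⇑b (m + 1) ι) κ = if ι = κ then 1 else 0 := by
  rw [powBasis_repr_rElt, det_matchMatrix_of_strictMono hι hκ]

theorem eq_zero_of_mem_Wspace {m : ℕ} {w : ⨂[k]^(m + 1) V} (hw : w ∈ Wspace ⇑b (m + 1))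
    (hmono : ∀ K, StrictMono K → (powBasis b (m + 1)).repr w K = 0) : w = 0 :=
  (powBasis b (m + 1)).ext_elem fun K => by
    simpa using eq_zero_of_mem_altAt_adjacent ((mem_Wspace_iff b).mp hw) hmono K

theorem Wspace_eq_bot {m : ℕ} (hm : n < m) : Wspace (k := k) ⇑b m = ⊥ := by
  obtain ⟨m, rfl⟩ : ∃ m', m = m' + 1 := Nat.exists_eq_succ_of_ne_zero (by omega)
  refine eq_bot_iff.mpr fun w hw => eq_zero_of_mem_Wspace b hw fun K hK => ?_
  have := Fintype.card_le_of_injective K hK.injective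
  simp only [Fintype.card_fin] at this
  omega

theorem exists_basis_Wspace (m : ℕ) :
    ∃ B : Basis {ι : Fin (m + 1) → Fin n // StrictMono ι} k (Wspace (k := k) ⇑b (m + 1)),
      ∀ ι, (B ι : ⨂[k]^(m + 1) V) = rElt ⇑b (m + 1) ι.val := by
  classical
  set v : {ι : Fin (m + 1) → Fin n // StrictMono ι} → ⨂[k]^(m + 1) V :=
    fun ι => rElt ⇑b (m + 1) ι.val
  have hrepr : ∀ ι κ, (powBasis b (m + 1)).repr (v ι) κ.val = (Pi.single ι 1 : _ → k) κ :=
    fun ι κ => by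
      simp [v, powBasis_repr_rElt_of_strictMono b ι.2 κ.2, Pi.single_apply, Subtype.ext_iff,
        eq_comm]
  have hli : LinearIndependent k v := by
    let coords : ⨂[k]^(m + 1) V →ₗ[k] {ι : Fin (m + 1) → Fin n // StrictMono ι} → k :=
      LinearMap.pi fun κ => (powBasis b (m + 1)).coord κ.val
    have hcoords : coords ∘ v = ⇑(Pi.basisFun k _) := by
      ext ι κ
      simp [coords, hrepr]
    exact LinearIndependent.of_comp coords (hcoords ▸ (Pi.basisFun k _).linearIndependent)
  have hspan : Submodule.span k (Set.range v) = Wspace ⇑b (m + 1) := by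
    refine le_antisymm (Submodule.span_le.mpr
      (Set.range_subset_iff.mpr fun ι => rElt_mem_Wspace b m ι)) fun w hw => ?_
    have hsum : w = ∑ ι, (powBasis b (m + 1)).repr w ι.val • v ι := by
      refine sub_eq_zero.mp (eq_zero_of_mem_Wspace b (sub_mem hw (Submodule.sum_mem _
        fun ι _ => Submodule.smul_mem _ _ (rElt_mem_Wspace b m ι.val))) fun K hK => ?_)
      simp [hrepr _ ⟨K, hK⟩, Pi.single_apply]
    rw [hsum]
    exact Submodule.sum_mem _ fun ι _ =>
      Submodule.smul_mem _ _ (Submodule.subset_span ⟨ι, rfl⟩)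
  exact ⟨(Basis.span hli).map (LinearEquiv.ofEq _ _ hspan),
    fun ι => by simp [Basis.span_apply, v]⟩

end Subspaces

theorem lemma_4_2_b_e_general {n : ℕ} (b : Module.Basis (Fin n) k V) :
    (∀ (m : ℕ) (ι : Fin (m+2) → Fin n),
      rElt (k := k) (fun i => b i) (m+2) ι ∈ Wspace (k := k) (fun i => b i) (m+2))
    ∧ (∀ m : ℕ, ∃ B : Module.Basis {ι : Fin (m+2) → Fin n // StrictMono ι} k
        (Wspace (k := k) (fun i => b i) (m+2)),
        ∀ ι : {ι : Fin (m+2) → Fin n // StrictMono ι},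
          (B ι : ⨂[k]^(m+2) V) = rElt (k := k) (fun i => b i) (m+2) ι.val)
    ∧ (∀ m : ℕ, n < m → Wspace (k := k) (fun i => b i) m = ⊥) :=
  ⟨fun m => rElt_mem_Wspace b (m + 1), fun m => exists_basis_Wspace b (m + 1),
    fun _ => Wspace_eq_bot b⟩

/-- **Lemma 4.2(b) and (e)**: each `r_{i_1 ⋯ i_m}` lies in `W_m`, the family
`{r_{i_1 ⋯ i_m} : i_1 < ⋯ < i_m}` is a basis of `W_m` (for `m ≥ 2`), and `W_m = 0`
for `m > n`. -/
theorem lemma_4_2_b_e {n : ℕ} (hn : 2 ≤ n) (b : Module.Basis (Fin n) k V) :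
    (∀ (m : ℕ) (ι : Fin (m+2) → Fin n),
      rElt (k := k) (fun i => b i) (m+2) ι ∈ Wspace (k := k) (fun i => b i) (m+2))
    ∧ (∀ m : ℕ, ∃ B : Module.Basis {ι : Fin (m+2) → Fin n // StrictMono ι} k
        (Wspace (k := k) (fun i => b i) (m+2)),
        ∀ ι : {ι : Fin (m+2) → Fin n // StrictMono ι},
          (B ι : ⨂[k]^(m+2) V) = rElt (k := k) (fun i => b i) (m+2) ι.val)
    ∧ (∀ m : ℕ, n < m → Wspace (k := k) (fun i => b i) m = ⊥) :=
  lemma_4_2_b_e_general b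

end OrePaper
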